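/- Let 0 ≤ s ≤ t ≤ 1 and 0 ≤ x ≤ 1. Then ∫₀ˢ ∫_ℝ (P_{t−s+r} 1_{[0,x]}(z) − P_r 1_{[0,x]}(z))² dz dr ≤ (t−s) x / 2. In particular the left-hand side is at most t − s. -/

import Mathlib

/-!
With `h = t - s`, expanding the square and using that `P` is a symmetric semigroup turns the
inner integral into the second difference `E (2r + 2h) - 2 E (2r + h) + E (2r)` of
`E τ = ∫ P_τ 1_{[0,x]} · 1_{[0,x]}`. By Fubini and the overlap
`|[0,x] ∩ ([0,x] + d)| = (x - |d|)⁺`, one gets `E τ = ∫ φ(w) (x - √τ |w|)⁺ dw` with `φ` the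
standard Gaussian density, so `E` is antitone with values in `[0, x]`. Integrating in `r`
telescopes the second difference into `(∫_{2s}^{2s+h} D - ∫_0^h D) / 2` with
`D u = E (u + h) - E u ∈ [-x, 0]`, which is at most `h x / 2`.
-/

open MeasureTheory Real Filter

noncomputable def heatKernel (t x : ℝ) : ℝ :=
  (1 / Real.sqrt (2 * Real.pi * t)) * Real.exp (-x ^ 2 / (2 * t))

noncomputable def heatP (t : ℝ) (f : ℝ → ℝ) (x : ℝ) : ℝ :=
  if t = 0 then f x else ∫ y : ℝ, heatKernel t (x - y) * f y

noncomputable def scaled (N : ℝ) (f : ℝ → ℝ) (x : ℝ) : ℝ :=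
  (1 / Real.sqrt N) * f (x / N)

noncomputable def ft (f : ℝ → ℝ) (z : ℝ) : ℂ :=
  ∫ y : ℝ, (f y : ℂ) * Complex.exp (Complex.I * z * y)

lemma heatKernel_eq_gaussianPDFReal {t : ℝ} (ht : 0 ≤ t) :
    heatKernel t = ProbabilityTheory.gaussianPDFReal 0 t.toNNReal := by
  ext z
  simp [heatKernel, ProbabilityTheory.gaussianPDFReal, Real.coe_toNNReal t ht]

lemma heatKernel_nonneg (t z : ℝ) : 0 ≤ heatKernel t z := by
  unfold heatKernel
  positivity

lemma heatKernel_le {t : ℝ} (ht : 0 < t) (z : ℝ) :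
    heatKernel t z ≤ 1 / √(2 * π * t) := by
  unfold heatKernel
  refine mul_le_of_le_one_right (by positivity) (Real.exp_le_one_iff.mpr ?_)
  rw [neg_div]
  exact neg_nonpos.mpr (by positivity)

lemma heatKernel_neg (t z : ℝ) : heatKernel t (-z) = heatKernel t z := by
  simp [heatKernel]

@[fun_prop]
lemma continuous_heatKernel (t : ℝ) : Continuous (heatKernel t) := by
  unfold heatKernel
  fun_prop

lemma integrable_heatKernel {t : ℝ} (ht : 0 ≤ t) : Integrable (heatKernel t) := by
  rw [heatKernel_eq_gaussianPDFReal ht]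
  exact ProbabilityTheory.integrable_gaussianPDFReal 0 _

lemma integral_heatKernel {t : ℝ} (ht : 0 < t) : ∫ z, heatKernel t z = 1 := by
  rw [heatKernel_eq_gaussianPDFReal ht.le]
  exact ProbabilityTheory.integral_gaussianPDFReal_eq_one 0 (by simpa using ht)

lemma heatKernel_sqrt_mul {t : ℝ} (ht : 0 < t) (w : ℝ) :
    heatKernel t (√t * w) = (√t)⁻¹ * heatKernel 1 w := by
  unfold heatKernel
  rw [mul_pow, Real.sq_sqrt ht.le, mul_one, Real.sqrt_mul (by positivity)]
  have : √t ≠ 0 := by positivity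
  field_simp

/-- Completing the square in `z`. -/
lemma heatKernel_mul_heatKernel_sub {a b : ℝ} (ha : 0 < a) (hb : 0 < b) (w z : ℝ) :
    heatKernel a z * heatKernel b (w - z)
      = heatKernel (a + b) w * heatKernel (a * b / (a + b)) (z - a * w / (a + b)) := by
  unfold heatKernel
  rw [mul_mul_mul_comm, ← Real.exp_add, mul_mul_mul_comm, ← Real.exp_add]
  congr 1
  · rw [div_mul_div_comm, div_mul_div_comm, ← Real.sqrt_mul (by positivity),
      ← Real.sqrt_mul (by positivity)]
    congr 2
    field_simp
  · congr 1
    field_simp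
    ring

lemma integral_heatKernel_mul_heatKernel_sub {a b : ℝ} (ha : 0 < a) (hb : 0 < b) (w : ℝ) :
    ∫ z, heatKernel a z * heatKernel b (w - z) = heatKernel (a + b) w := by
  simp only [heatKernel_mul_heatKernel_sub ha hb w]
  rw [integral_const_mul, integral_sub_right_eq_self, integral_heatKernel (by positivity), mul_one]

section HeatSemigroup

variable {f g : ℝ → ℝ} {a b t : ℝ}

lemma heatP_of_pos (ht : 0 < t) (f : ℝ → ℝ) (z : ℝ) :
    heatP t f z = ∫ y, heatKernel t (z - y) * f y := by
  rw [heatP, if_neg ht.ne']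

lemma heatP_eq_integral_sqrt_mul (ht : 0 < t) (f : ℝ → ℝ) (z : ℝ) :
    heatP t f z = ∫ w, heatKernel 1 w * f (z - √t * w) := by
  have hst : 0 < √t := Real.sqrt_pos.mpr ht
  have hscale := Measure.integral_comp_mul_left (fun y => heatKernel t y * f (z - y)) √t
  simp only [heatKernel_sqrt_mul ht, mul_assoc, integral_const_mul, abs_of_pos (inv_pos.mpr hst),
    smul_eq_mul] at hscale
  rw [heatP_of_pos ht, ← integral_sub_left_eq_self _ volume z]
  simp only [sub_sub_cancel]
  exact (mul_left_cancel₀ (inv_ne_zero hst.ne') hscale).symm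

lemma abs_heatP_le {C : ℝ} (hfC : ∀ y, |f y| ≤ C) (ht : 0 < t) (z : ℝ) :
    |heatP t f z| ≤ C := by
  rw [heatP_of_pos ht, ← Real.norm_eq_abs]
  calc ‖∫ y, heatKernel t (z - y) * f y‖ ≤ ∫ y, heatKernel t (z - y) * C := by
        refine norm_integral_le_of_norm_le ((integrable_heatKernel ht.le).comp_sub_left z
          |>.mul_const C) (Eventually.of_forall fun y => ?_)
        rw [norm_mul, Real.norm_of_nonneg (heatKernel_nonneg _ _), Real.norm_eq_abs]
        exact mul_le_mul_of_nonneg_left (hfC y) (heatKernel_nonneg _ _)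
    _ = C := by
        rw [integral_mul_const, integral_sub_left_eq_self (heatKernel t) volume z,
          integral_heatKernel ht, one_mul]

lemma integrable_heatP (hf : Integrable f) (ht : 0 < t) : Integrable (heatP t f) := by
  have h := (hf.convolution_integrand (ContinuousLinearMap.mul ℝ ℝ)
    (integrable_heatKernel ht.le)).integral_prod_left
  convert h using 2 with z
  rw [heatP_of_pos ht]
  simp [mul_comm]

lemma heatP_heatP (hf : Integrable f) (ha : 0 < a) (hb : 0 < b) (v : ℝ) :
    heatP b (heatP a f) v = heatP (a + b) f v := by
  have hFubini : Integrable (Function.uncurry fun z y =>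
      heatKernel b (v - z) * (heatKernel a (z - y) * f y)) (volume.prod volume) := by
    refine Integrable.mono' (((integrable_heatKernel hb.le).comp_sub_left v).mul_prod
      (hf.norm.const_mul (1 / √(2 * π * a)))) ?_ (Eventually.of_forall fun ⟨z, y⟩ => ?_)
    · exact ((continuous_heatKernel b).comp (continuous_const.sub continuous_fst))
        |>.aestronglyMeasurable.mul
          ((((continuous_heatKernel a).comp (continuous_fst.sub continuous_snd))
            |>.aestronglyMeasurable.mul hf.aestronglyMeasurable.comp_snd))
    · rw [Function.uncurry_apply_pair, norm_mul, norm_mul,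
        Real.norm_of_nonneg (heatKernel_nonneg _ _), Real.norm_of_nonneg (heatKernel_nonneg _ _)]
      exact mul_le_mul_of_nonneg_left (mul_le_mul_of_nonneg_right (heatKernel_le ha _)
        (norm_nonneg _)) (heatKernel_nonneg _ _)
  calc heatP b (heatP a f) v
      = ∫ z, ∫ y, heatKernel b (v - z) * (heatKernel a (z - y) * f y) := by
        simp only [heatP_of_pos hb, heatP_of_pos ha, integral_const_mul]
    _ = ∫ y, ∫ z, heatKernel b (v - z) * (heatKernel a (z - y) * f y) :=
        integral_integral_swap hFubini
    _ = ∫ y, heatKernel (a + b) (v - y) * f y := by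
        refine integral_congr_ae (Eventually.of_forall fun y => ?_)
        have hshift := integral_sub_right_eq_self
          (fun u => heatKernel a u * heatKernel b (v - y - u)) (μ := volume) y
        simp only [sub_sub_sub_cancel_right] at hshift
        simp only [← integral_heatKernel_mul_heatKernel_sub ha hb, ← hshift,
          ← integral_mul_const]
        congr 1 with z
        ring
    _ = heatP (a + b) f v := (heatP_of_pos (by positivity) f v).symm

lemma integral_mul_heatP_comm (hf : Integrable f) (hg : Integrable g) (ht : 0 < t) :
    ∫ z, g z * heatP t f z = ∫ z, heatP t g z * f z := by
  have hFubini : Integrable (Function.uncurry fun z y =>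
      g z * (heatKernel t (z - y) * f y)) (volume.prod volume) := by
    refine Integrable.mono' (hg.norm.mul_prod (hf.norm.const_mul (1 / √(2 * π * t)))) ?_
      (Eventually.of_forall fun ⟨z, y⟩ => ?_)
    · exact hg.aestronglyMeasurable.comp_fst.mul
        ((((continuous_heatKernel t).comp (continuous_fst.sub continuous_snd))
          |>.aestronglyMeasurable.mul hf.aestronglyMeasurable.comp_snd))
    · rw [Function.uncurry_apply_pair, norm_mul, norm_mul,
        Real.norm_of_nonneg (heatKernel_nonneg _ _)]
      exact mul_le_mul_of_nonneg_left (mul_le_mul_of_nonneg_right (heatKernel_le ht _)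
        (norm_nonneg _)) (norm_nonneg _)
  calc ∫ z, g z * heatP t f z
      = ∫ z, ∫ y, g z * (heatKernel t (z - y) * f y) := by
        simp only [heatP_of_pos ht, integral_const_mul]
    _ = ∫ y, ∫ z, g z * (heatKernel t (z - y) * f y) := integral_integral_swap hFubini
    _ = ∫ y, heatP t g y * f y := by
        refine integral_congr_ae (Eventually.of_forall fun y => ?_)
        simp only [heatP_of_pos ht, ← integral_mul_const]
        congr 1 with z
        rw [← neg_sub, heatKernel_neg]
        ring

lemma integral_heatP_mul_heatP (hf : Integrable f) (ha : 0 < a) (hb : 0 < b) :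
    ∫ z, heatP a f z * heatP b f z = ∫ z, heatP (a + b) f z * f z := by
  simp only [integral_mul_heatP_comm hf (integrable_heatP hf ha) hb, heatP_heatP hf ha hb]

lemma integral_sq_heatP_sub_heatP {C : ℝ} (hf : Integrable f) (hfC : ∀ y, |f y| ≤ C)
    (ha : 0 < a) (hb : 0 < b) :
    ∫ z, (heatP a f z - heatP b f z) ^ 2
      = (∫ z, heatP (a + a) f z * f z) - 2 * (∫ z, heatP (a + b) f z * f z)
        + ∫ z, heatP (b + b) f z * f z := by
  have hprod : ∀ {c d : ℝ}, 0 < c → 0 < d → Integrable fun z => heatP c f z * heatP d f z :=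
    fun hc hd => (integrable_heatP hf hd).bdd_mul (integrable_heatP hf hc).aestronglyMeasurable
      (Eventually.of_forall fun z => (Real.norm_eq_abs _).trans_le (abs_heatP_le hfC hc z))
  have hexpand : (fun z => (heatP a f z - heatP b f z) ^ 2) = fun z =>
      heatP a f z * heatP a f z - 2 * (heatP a f z * heatP b f z) + heatP b f z * heatP b f z :=
    funext fun z => by ring
  have hfirst : Integrable fun z => heatP a f z * heatP a f z - 2 * (heatP a f z * heatP b f z) :=
    (hprod ha ha).sub ((hprod ha hb).const_mul 2)
  rw [hexpand, integral_add hfirst (hprod hb hb),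
    integral_sub (hprod ha ha) ((hprod ha hb).const_mul 2), integral_const_mul,
    integral_heatP_mul_heatP hf ha ha, integral_heatP_mul_heatP hf ha hb,
    integral_heatP_mul_heatP hf hb hb]

end HeatSemigroup

section IntervalIndicator

variable {x : ℝ}

lemma abs_indicator_Icc_one_le (y : ℝ) :
    |Set.indicator (Set.Icc 0 x) (1 : ℝ → ℝ) y| ≤ 1 := by
  by_cases hy : y ∈ Set.Icc 0 x <;> simp [hy]

lemma integrable_indicator_Icc_one : Integrable (Set.indicator (Set.Icc 0 x) (1 : ℝ → ℝ)) :=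
  (integrable_indicator_iff measurableSet_Icc).mpr (integrableOn_const measure_Icc_lt_top.ne)

lemma integral_indicator_mul_indicator_sub (d : ℝ) :
    ∫ u, Set.indicator (Set.Icc 0 x) 1 u * Set.indicator (Set.Icc 0 x) 1 (u - d)
      = max (x - |d|) 0 := by
  have hshift : (fun u => Set.indicator (Set.Icc 0 x) (1 : ℝ → ℝ) (u - d))
      = Set.indicator (Set.Icc d (x + d)) 1 := by
    ext u
    simp only [Set.indicator_apply, Set.mem_Icc, sub_nonneg, sub_le_iff_le_add, Pi.one_apply]
  have hprod : (fun u => Set.indicator (Set.Icc 0 x) (1 : ℝ → ℝ) u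
        * Set.indicator (Set.Icc 0 x) 1 (u - d))
      = (Set.Icc 0 x ∩ Set.Icc d (x + d)).indicator 1 := by
    rw [Set.inter_indicator_one, ← hshift]
    rfl
  rw [hprod, integral_indicator_one (measurableSet_Icc.inter measurableSet_Icc),
    Set.Icc_inter_Icc, Real.volume_real_Icc]
  rcases le_total 0 d with hd | hd
  · rw [abs_of_nonneg hd, max_eq_right hd, min_eq_left (by linarith)]
  · rw [abs_of_nonpos hd, max_eq_left hd, min_eq_right (by linarith)]
    ring_nf

noncomputable def intervalHeatPairing (x τ : ℝ) : ℝ :=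
  ∫ w, heatKernel 1 w * max (x - √τ * |w|) 0

lemma intervalHeatPairing_nonneg (x τ : ℝ) : 0 ≤ intervalHeatPairing x τ :=
  integral_nonneg fun _ => mul_nonneg (heatKernel_nonneg _ _) (le_max_right _ _)

lemma intervalHeatPairing_le (hx : 0 ≤ x) (τ : ℝ) : intervalHeatPairing x τ ≤ x := by
  calc intervalHeatPairing x τ ≤ ∫ w, heatKernel 1 w * x := by
        refine integral_mono_of_nonneg (Eventually.of_forall fun _ => ?_)
          ((integrable_heatKernel zero_le_one).mul_const x) (Eventually.of_forall fun w => ?_)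
        · exact mul_nonneg (heatKernel_nonneg _ _) (le_max_right _ _)
        · refine mul_le_mul_of_nonneg_left (max_le ?_ hx) (heatKernel_nonneg _ _)
          nlinarith [Real.sqrt_nonneg τ, abs_nonneg w]
    _ = x := by rw [integral_mul_const, integral_heatKernel one_pos, one_mul]

lemma antitone_intervalHeatPairing (x : ℝ) : Antitone (intervalHeatPairing x) := by
  intro τ₁ τ₂ hτ
  have hbound : ∀ w, ‖max (x - √τ₁ * |w|) 0‖ ≤ |x| := fun w => by
    rw [Real.norm_of_nonneg (le_max_right _ _)]
    exact max_le (by nlinarith [le_abs_self x, Real.sqrt_nonneg τ₁, abs_nonneg w]) (abs_nonneg x)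
  refine integral_mono_of_nonneg (Eventually.of_forall fun _ => ?_)
    ((integrable_heatKernel zero_le_one).mul_bdd (by fun_prop) (Eventually.of_forall hbound))
    (Eventually.of_forall fun w => ?_)
  · exact mul_nonneg (heatKernel_nonneg _ _) (le_max_right _ _)
  · refine mul_le_mul_of_nonneg_left (max_le_max ?_ le_rfl) (heatKernel_nonneg _ _)
    nlinarith [Real.sqrt_le_sqrt hτ, abs_nonneg w]

lemma integral_heatP_indicator_mul_indicator {τ : ℝ} (hτ : 0 < τ) :
    ∫ z, heatP τ (Set.indicator (Set.Icc 0 x) 1) z * Set.indicator (Set.Icc 0 x) 1 z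
      = intervalHeatPairing x τ := by
  set f : ℝ → ℝ := Set.indicator (Set.Icc 0 x) 1
  have hFubini : Integrable (Function.uncurry fun z w => heatKernel 1 w * f (z - √τ * w) * f z)
      (volume.prod volume) := by
    refine Integrable.mono' ((integrable_indicator_Icc_one (x := x)).norm.mul_prod
      (integrable_heatKernel zero_le_one).norm) ?_ (Eventually.of_forall fun ⟨z, w⟩ => ?_)
    · have hfm : Measurable f := measurable_one.indicator measurableSet_Icc
      exact Measurable.aestronglyMeasurable (by fun_prop)
    · dsimp only [Function.uncurry_apply_pair]
      rw [norm_mul, norm_mul, mul_comm ‖f z‖, Real.norm_eq_abs (f _)]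
      exact mul_le_mul_of_nonneg_right
        (mul_le_of_le_one_right (norm_nonneg _) (abs_indicator_Icc_one_le _)) (norm_nonneg _)
  calc ∫ z, heatP τ f z * f z
      = ∫ z, ∫ w, heatKernel 1 w * f (z - √τ * w) * f z := by
        simp only [heatP_eq_integral_sqrt_mul hτ, integral_mul_const]
    _ = ∫ w, ∫ z, heatKernel 1 w * f (z - √τ * w) * f z := integral_integral_swap hFubini
    _ = ∫ w, heatKernel 1 w * max (x - √τ * |w|) 0 := by
        congr 1 with w
        have hd : √τ * |w| = |√τ * w| := by rw [abs_mul, abs_of_nonneg (Real.sqrt_nonneg τ)]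
        rw [hd, ← integral_indicator_mul_indicator_sub, ← integral_const_mul]
        simp only [f, mul_comm, mul_left_comm]

lemma integral_sq_heatP_indicator_sub {h r : ℝ} (hh : 0 ≤ h) (hr : 0 < r) :
    ∫ z, (heatP (h + r) (Set.indicator (Set.Icc 0 x) 1) z
        - heatP r (Set.indicator (Set.Icc 0 x) 1) z) ^ 2
      = intervalHeatPairing x (2 * r + 2 * h) - 2 * intervalHeatPairing x (2 * r + h)
        + intervalHeatPairing x (2 * r) := by
  have hhr : 0 < h + r := by linarith
  rw [integral_sq_heatP_sub_heatP integrable_indicator_Icc_one abs_indicator_Icc_one_le hhr hr,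
    integral_heatP_indicator_mul_indicator (by positivity),
    integral_heatP_indicator_mul_indicator (by positivity),
    integral_heatP_indicator_mul_indicator (by positivity)]
  ring_nf

end IntervalIndicator

lemma integral_second_difference_le {G : ℝ → ℝ} {M h s : ℝ} (hG : Antitone G)
    (hG0 : ∀ u, 0 ≤ G u) (hGM : ∀ u, G u ≤ M) (hh : 0 ≤ h) :
    ∫ r in (0 : ℝ)..s, (G (2 * r + 2 * h) - 2 * G (2 * r + h) + G (2 * r)) ≤ h * M / 2 := by
  set D : ℝ → ℝ := fun u => G (u + h) - G u
  have hDint : ∀ a b, IntervalIntegrable D volume a b := fun a b =>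
    (hG.comp_monotone (monotone_id.add_const h)).intervalIntegrable.sub hG.intervalIntegrable
  have hDle : ∀ u, D u ≤ 0 := fun u => sub_nonpos.mpr (hG (le_add_of_nonneg_right hh))
  have hDge : ∀ u, -M ≤ D u := fun u => by linarith [hG0 (u + h), hGM u]
  have hsplit : ∀ r, G (2 * r + 2 * h) - 2 * G (2 * r + h) + G (2 * r)
      = D (2 * r + h) - D (2 * r) := fun r => by
    simp only [D, add_assoc, ← two_mul]
    ring
  have hshift : ∫ r in (0 : ℝ)..s, (D (2 * r + h) - D (2 * r))
      = ((∫ u in (2 * s)..(2 * s + h), D u) - ∫ u in (0 : ℝ)..h, D u) / 2 := by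
    have hcomp : ∀ d, IntervalIntegrable (fun r => D (2 * r + d)) volume 0 s := fun d =>
      (hG.comp_monotone fun a b hab => by linarith).intervalIntegrable.sub
        (hG.comp_monotone fun a b hab => by linarith).intervalIntegrable
    rw [intervalIntegral.integral_sub (hcomp h) (by simpa using hcomp 0),
      intervalIntegral.integral_comp_mul_add _ two_ne_zero,
      intervalIntegral.integral_comp_mul_left _ two_ne_zero, ← smul_sub,
      intervalIntegral.integral_interval_sub_interval_comm' (hDint _ _) (hDint _ _) (hDint _ _)]
    simp only [mul_zero, zero_add, smul_eq_mul]
    ring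
  have hfar : ∫ u in (2 * s)..(2 * s + h), D u ≤ 0 := by
    calc ∫ u in (2 * s)..(2 * s + h), D u ≤ ∫ _ in (2 * s)..(2 * s + h), (0 : ℝ) :=
          intervalIntegral.integral_mono_on (by linarith) (hDint _ _) intervalIntegrable_const
            fun u _ => hDle u
      _ = 0 := intervalIntegral.integral_zero
  have hnear : -(h * M) ≤ ∫ u in (0 : ℝ)..h, D u := by
    calc -(h * M) = ∫ _ in (0 : ℝ)..h, -M := by simp
      _ ≤ ∫ u in (0 : ℝ)..h, D u :=
          intervalIntegral.integral_mono_on hh intervalIntegrable_const (hDint _ _)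
            fun u _ => hDge u
  rw [intervalIntegral.integral_congr fun r _ => hsplit r, hshift]
  linarith

theorem stmt7_general (s t x : ℝ) (hs : 0 ≤ s) (hst : s ≤ t)
    (hx0 : 0 ≤ x) (hx1 : x ≤ 1) :
    (∫ r in (0:ℝ)..s, ∫ z : ℝ,
        (heatP (t - s + r) (Set.indicator (Set.Icc 0 x) 1) z
          - heatP r (Set.indicator (Set.Icc 0 x) 1) z) ^ 2)
      ≤ (t - s) * x / 2
    ∧ (∫ r in (0:ℝ)..s, ∫ z : ℝ,
        (heatP (t - s + r) (Set.indicator (Set.Icc 0 x) 1) z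
          - heatP r (Set.indicator (Set.Icc 0 x) 1) z) ^ 2)
      ≤ t - s := by
  have hts : 0 ≤ t - s := sub_nonneg.mpr hst
  refine (and_iff_left_of_imp fun h => h.trans (by nlinarith)).mpr ?_
  calc _ = ∫ r in (0:ℝ)..s, (intervalHeatPairing x (2 * r + 2 * (t - s))
          - 2 * intervalHeatPairing x (2 * r + (t - s)) + intervalHeatPairing x (2 * r)) := by
        refine intervalIntegral.integral_congr_ae (Eventually.of_forall fun r hr => ?_)
        rw [Set.uIoc_of_le hs] at hr
        exact integral_sq_heatP_indicator_sub hts hr.1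
    _ ≤ (t - s) * x / 2 :=
        integral_second_difference_le (antitone_intervalHeatPairing x)
          (intervalHeatPairing_nonneg x) (intervalHeatPairing_le hx0) hts

theorem stmt7 (s t x : ℝ) (hs : 0 ≤ s) (hst : s ≤ t) (ht : t ≤ 1)
    (hx0 : 0 ≤ x) (hx1 : x ≤ 1) :
    (∫ r in (0:ℝ)..s, ∫ z : ℝ,
        (heatP (t - s + r) (Set.indicator (Set.Icc 0 x) 1) z
          - heatP r (Set.indicator (Set.Icc 0 x) 1) z) ^ 2)
      ≤ (t - s) * x / 2
    ∧ (∫ r in (0:ℝ)..s, ∫ z : ℝ,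
        (heatP (t - s + r) (Set.indicator (Set.Icc 0 x) 1) z
          - heatP r (Set.indicator (Set.Icc 0 x) 1) z) ^ 2)
      ≤ t - s :=
  stmt7_general s t x hs hst hx0 hx1
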